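/- For $m > 0$ and $n, r \in \mathbb{Z}$ with $r^2 - 4mn = 0$, every function on $\mathbb{H} \times \mathbb{C}$ of the form $\phi(\tau,z) = c_1\, y^{3/2-k} q^n \zeta^r + c_2\, q^n\zeta^r$, where $\tau = x + iy$, $q = e^{2\pi i \tau}$ and $\zeta = e^{2\pi i z}$, satisfies $\mathcal{C}^{\mathrm{sk}}_{k,m}(\phi) = 0$. -/

import Mathlib

open Complex

/-- Wirtinger derivative `∂_w` of `f : ℂ → ℂ`. -/
noncomputable def wD (f : ℂ → ℂ) (w : ℂ) : ℂ :=
  (1 / 2) * (fderiv ℝ f w 1 - Complex.I * fderiv ℝ f w Complex.I)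

/-- Conjugate Wirtinger derivative `∂_w̄`. -/
noncomputable def wDbar (f : ℂ → ℂ) (w : ℂ) : ℂ :=
  (1 / 2) * (fderiv ℝ f w 1 + Complex.I * fderiv ℝ f w Complex.I)

noncomputable def dT (φ : ℂ → ℂ → ℂ) : ℂ → ℂ → ℂ := fun τ z => wD (fun w => φ w z) τ
noncomputable def dTbar (φ : ℂ → ℂ → ℂ) : ℂ → ℂ → ℂ := fun τ z => wDbar (fun w => φ w z) τ
noncomputable def dZ (φ : ℂ → ℂ → ℂ) : ℂ → ℂ → ℂ := fun τ z => wD (fun w => φ τ w) z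
noncomputable def dZbar (φ : ℂ → ℂ → ℂ) : ℂ → ℂ → ℂ := fun τ z => wDbar (fun w => φ τ w) z

/-- The heat operator `L_m = 8πim ∂_τ - ∂_{zz}`. -/
noncomputable def heatOp (m : ℤ) (φ : ℂ → ℂ → ℂ) : ℂ → ℂ → ℂ :=
  fun τ z => 8 * (Real.pi : ℂ) * Complex.I * (m : ℂ) * dT φ τ z - dZ (dZ φ) τ z

/-- The Casimir-type operator `𝒞^{sk}_{k,m}` on smooth functions `ℍ × ℂ → ℂ`. -/
noncomputable def Csk (k m : ℤ) (φ : ℂ → ℂ → ℂ) : ℂ → ℂ → ℂ := fun τ z =>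
  let π' : ℂ := (Real.pi : ℂ)
  let tb : ℂ := τ - (starRingEnd ℂ) τ
  let zb : ℂ := z - (starRingEnd ℂ) z
  (-2) * tb ^ 2 * dTbar (heatOp m φ) τ z
    + (2 * (k : ℂ) - 1) * tb * heatOp m φ τ z
    + 2 * (1 - (k : ℂ)) * tb * dZ (dZbar φ) τ z
    + 2 * tb * zb * dZ (dZ (dZbar φ)) τ z
    - 16 * π' * Complex.I * (m : ℂ) * tb * zb * dT (dZbar φ) τ z
    + 8 * π' * Complex.I * (m : ℂ) * (1 - (k : ℂ)) * zb * dZbar φ τ z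
    + 2 * tb ^ 2 * dT (dZbar (dZbar φ)) τ z
    + (4 * π' * Complex.I * (m : ℂ) * zb ^ 2 + tb) * dZbar (dZbar φ) τ z
    + 2 * tb * zb * dZ (dZbar (dZbar φ)) τ z

lemma wD_of_hasDerivAt {f : ℂ → ℂ} {d w : ℂ} (h : HasDerivAt f d w) : wD f w = d := by
  have hf := (h.hasFDerivAt).restrictScalars ℝ
  rw [wD, hf.fderiv]
  simp [ContinuousLinearMap.coe_restrictScalars', smul_eq_mul]
  linear_combination (-(d/2)) * Complex.I_sq

lemma wDbar_of_hasDerivAt {f : ℂ → ℂ} {d w : ℂ} (h : HasDerivAt f d w) : wDbar f w = 0 := by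
  have hf := (h.hasFDerivAt).restrictScalars ℝ
  rw [wDbar, hf.fderiv]
  simp [ContinuousLinearMap.coe_restrictScalars', smul_eq_mul]
  linear_combination d * Complex.I_sq

lemma wD_zero (w : ℂ) : wD (fun _ => (0:ℂ)) w = 0 := by
  simp [wD, fderiv_const]

lemma wDbar_zero (w : ℂ) : wDbar (fun _ => (0:ℂ)) w = 0 := by
  simp [wDbar, fderiv_const]

noncomputable def Ee (n r : ℤ) : ℂ → ℂ → ℂ := fun τ z =>
  Complex.exp (2 * (Real.pi : ℂ) * Complex.I * ((n:ℂ) * τ + (r:ℂ) * z))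

noncomputable def Phi (t C₁ C₂ : ℂ) (n r : ℤ) : ℂ → ℂ → ℂ := fun τ z =>
  C₁ * ((τ.im : ℂ)) ^ t * Ee n r τ z + C₂ * Ee n r τ z

lemma hasDerivAt_Ee_z (n r : ℤ) (τ z : ℂ) :
    HasDerivAt (fun w => Ee n r τ w) (2*(Real.pi:ℂ)*Complex.I*(r:ℂ) * Ee n r τ z) z := by
  have h1 : HasDerivAt (fun w : ℂ => 2*(Real.pi:ℂ)*Complex.I*((n:ℂ)*τ + (r:ℂ)*w))
      (2*(Real.pi:ℂ)*Complex.I*(r:ℂ)) z := by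
    have := (((hasDerivAt_id z).const_mul (r:ℂ)).const_add ((n:ℂ)*τ)).const_mul
      (2*(Real.pi:ℂ)*Complex.I)
    simpa using this
  have := h1.cexp
  simp only [Ee]
  refine this.congr_deriv ?_
  ring

lemma hasDerivAt_Ee_t (n r : ℤ) (z τ : ℂ) :
    HasDerivAt (fun w => Ee n r w z) (2*(Real.pi:ℂ)*Complex.I*(n:ℂ) * Ee n r τ z) τ := by
  have h1 : HasDerivAt (fun w : ℂ => 2*(Real.pi:ℂ)*Complex.I*((n:ℂ)*w + (r:ℂ)*z))
      (2*(Real.pi:ℂ)*Complex.I*(n:ℂ)) τ := by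
    have := (((hasDerivAt_id τ).const_mul (n:ℂ)).add_const ((r:ℂ)*z)).const_mul
      (2*(Real.pi:ℂ)*Complex.I)
    simpa using this
  have := h1.cexp
  simp only [Ee]
  refine this.congr_deriv ?_
  ring

lemma hasDerivAt_Phi_z (t C₁ C₂ : ℂ) (n r : ℤ) (τ z : ℂ) :
    HasDerivAt (fun w => Phi t C₁ C₂ n r τ w)
      (2*(Real.pi:ℂ)*Complex.I*(r:ℂ) * Phi t C₁ C₂ n r τ z) z := by
  have h := hasDerivAt_Ee_z n r τ z
  have h2 := (h.const_mul (C₁ * ((τ.im:ℂ))^t)).add (h.const_mul C₂)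
  simp only [Phi]
  refine h2.congr_deriv ?_
  ring

lemma hasFDerivAt_Phi_t (t C₁ C₂ : ℂ) (n r : ℤ) (z τ : ℂ) (hτ : 0 < τ.im) :
    wD (fun w => Phi t C₁ C₂ n r w z) τ
        = 2*(Real.pi:ℂ)*Complex.I*(n:ℂ) * Phi t C₁ C₂ n r τ z
          - (Complex.I/2) * C₁ * t * ((τ.im:ℂ))^(t-1) * Ee n r τ z ∧
      wDbar (fun w => Phi t C₁ C₂ n r w z) τ
        = (Complex.I/2) * C₁ * t * ((τ.im:ℂ))^(t-1) * Ee n r τ z := by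
  have hE := (hasDerivAt_Ee_t n r z τ).hasFDerivAt.restrictScalars ℝ
  have him : HasFDerivAt (fun w : ℂ => ((w.im:ℝ):ℂ)) (Complex.ofRealCLM.comp Complex.imCLM) τ :=
    (Complex.ofRealCLM.comp Complex.imCLM).hasFDerivAt
  have hpow : HasDerivAt (fun x : ℂ => x ^ t) (t * ((τ.im:ℝ):ℂ) ^ (t-1)) ((τ.im:ℝ):ℂ) :=
    (Complex.hasStrictDerivAt_cpow_const
      (Complex.mem_slitPlane_iff.mpr (Or.inl (by simpa using hτ)))).hasDerivAt
  have hP : HasFDerivAt (fun w : ℂ => ((w.im:ℝ):ℂ) ^ t)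
      (((ContinuousLinearMap.smulRight (1 : ℂ →L[ℂ] ℂ)
          (t * ((τ.im:ℝ):ℂ) ^ (t-1))).restrictScalars ℝ).comp
        (Complex.ofRealCLM.comp Complex.imCLM)) τ := by
    exact (hpow.hasFDerivAt.restrictScalars ℝ).comp τ him
  have hF := ((hP.const_mul C₁).mul hE).add (hE.const_mul C₂)
  set L : ℂ →L[ℝ] ℂ :=
    (C₁ * ((τ.im:ℂ)) ^ t) • ContinuousLinearMap.restrictScalars ℝ
        (ContinuousLinearMap.smulRight (1 : ℂ →L[ℂ] ℂ)
          (2 * (Real.pi:ℂ) * Complex.I * (n:ℂ) * Ee n r τ z)) +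
      Ee n r τ z • C₁ • (ContinuousLinearMap.restrictScalars ℝ
        (ContinuousLinearMap.smulRight (1 : ℂ →L[ℂ] ℂ)
          (t * ((τ.im:ℂ)) ^ (t - 1)))).comp (Complex.ofRealCLM.comp Complex.imCLM) +
      C₂ • ContinuousLinearMap.restrictScalars ℝ
        (ContinuousLinearMap.smulRight (1 : ℂ →L[ℂ] ℂ)
          (2 * (Real.pi:ℂ) * Complex.I * (n:ℂ) * Ee n r τ z)) with hL
  have hF' : HasFDerivAt (fun w => Phi t C₁ C₂ n r w z) L τ := hF
  have hf1 := hF'.fderiv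
  constructor
  · rw [wD, hf1, hL]
    simp [ContinuousLinearMap.coe_restrictScalars', smul_eq_mul, Phi]
    linear_combination (-(1/2) * (C₁ * ((τ.im:ℂ))^t + C₂) * (2*(Real.pi:ℂ)*Complex.I*(n:ℂ))
      * Ee n r τ z) * Complex.I_sq
  · rw [wDbar, hf1, hL]
    simp [ContinuousLinearMap.coe_restrictScalars', smul_eq_mul, Phi]
    linear_combination ((1/2) * (C₁ * ((τ.im:ℂ))^t + C₂) * (2*(Real.pi:ℂ)*Complex.I*(n:ℂ))
      * Ee n r τ z) * Complex.I_sq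

lemma dZbar_Phi (t C₁ C₂ : ℂ) (n r : ℤ) : dZbar (Phi t C₁ C₂ n r) = fun _ _ => 0 := by
  funext τ z
  exact wDbar_of_hasDerivAt (hasDerivAt_Phi_z t C₁ C₂ n r τ z)

lemma dZ_Phi (t C₁ C₂ : ℂ) (n r : ℤ) :
    dZ (Phi t C₁ C₂ n r)
      = fun τ z => 2*(Real.pi:ℂ)*Complex.I*(r:ℂ) * Phi t C₁ C₂ n r τ z := by
  funext τ z
  exact wD_of_hasDerivAt (hasDerivAt_Phi_z t C₁ C₂ n r τ z)

lemma dZ_dZ_Phi (t C₁ C₂ : ℂ) (n r : ℤ) (τ z : ℂ) :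
    dZ (dZ (Phi t C₁ C₂ n r)) τ z
      = (2*(Real.pi:ℂ)*Complex.I*(r:ℂ))^2 * Phi t C₁ C₂ n r τ z := by
  rw [dZ_Phi]
  have := wD_of_hasDerivAt
    ((hasDerivAt_Phi_z t C₁ C₂ n r τ z).const_mul (2*(Real.pi:ℂ)*Complex.I*(r:ℂ)))
  simpa [dZ, sq, mul_assoc] using this

lemma heat_Phi (t C₁ C₂ : ℂ) (m n r : ℤ) (τ z : ℂ) (hτ : 0 < τ.im) :
    heatOp m (Phi t C₁ C₂ n r) τ z
      = (8*(Real.pi:ℂ)*Complex.I*(m:ℂ) * (2*(Real.pi:ℂ)*Complex.I*(n:ℂ))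
          - (2*(Real.pi:ℂ)*Complex.I*(r:ℂ))^2) * Phi t C₁ C₂ n r τ z
        + 4*(Real.pi:ℂ)*(m:ℂ) * C₁ * t * ((τ.im:ℂ))^(t-1) * Ee n r τ z := by
  have h1 := (hasFDerivAt_Phi_t t C₁ C₂ n r z τ hτ).1
  have h2 := dZ_dZ_Phi t C₁ C₂ n r τ z
  simp only [heatOp, dT]
  rw [h1, h2]
  linear_combination (-(4*(Real.pi:ℂ)*(m:ℂ)*C₁*t*((τ.im:ℂ))^(t-1)*Ee n r τ z)) * Complex.I_sq


/-- for `m > 0` and `n, r ∈ ℤ` with `r² - 4mn = 0`, every function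
`φ(τ,z) = c₁ y^{3/2-k} qⁿ ζʳ + c₂ qⁿ ζʳ` (with `q = e^{2πiτ}`, `ζ = e^{2πiz}`,
`y = Im τ`) satisfies `𝒞^{sk}_{k,m}(φ) = 0` on `ℍ × ℂ`. -/
theorem stmt2 (k m n r : ℤ) (hm : 0 < m) (hD : r ^ 2 - 4 * m * n = 0) (c₁ c₂ : ℂ) :
    ∀ τ z : ℂ, 0 < τ.im →
      Csk k m (fun τ z =>
          c₁ * ((τ.im : ℂ)) ^ ((3 : ℂ) / 2 - (k : ℂ)) *
              Complex.exp (2 * (Real.pi : ℂ) * Complex.I * ((n : ℂ) * τ + (r : ℂ) * z))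
            + c₂ * Complex.exp (2 * (Real.pi : ℂ) * Complex.I *
                ((n : ℂ) * τ + (r : ℂ) * z))) τ z = 0 := by
  intro τ z hτ
  set s : ℂ := (3 : ℂ) / 2 - (k : ℂ) with hs
  show Csk k m (Phi s c₁ c₂ n r) τ z = 0
  -- cast of the discriminant condition
  have hr' : ((r:ℂ))^2 - 4*(m:ℂ)*(n:ℂ) = 0 := by
    have := congrArg (fun x : ℤ => (x : ℂ)) hD
    push_cast at this
    simpa using this
  have hcoef : (8*(Real.pi:ℂ)*Complex.I*(m:ℂ) * (2*(Real.pi:ℂ)*Complex.I*(n:ℂ))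
      - (2*(Real.pi:ℂ)*Complex.I*(r:ℂ))^2) = 0 := by
    linear_combination (-(4*(Real.pi:ℂ)^2*Complex.I^2)) * hr'
  set C : ℂ := 4*(Real.pi:ℂ)*(m:ℂ) * c₁ * s with hC
  -- heat operator equals a Phi-type function on the upper half plane
  have hheat : ∀ w : ℂ, 0 < w.im → ∀ z' : ℂ,
      heatOp m (Phi s c₁ c₂ n r) w z' = Phi (s-1) C 0 n r w z' := by
    intro w hw z'
    rw [heat_Phi s c₁ c₂ m n r w z' hw, hcoef]
    simp only [Phi, hC]
    ring
  have hev : (fun w => heatOp m (Phi s c₁ c₂ n r) w z) =ᶠ[nhds τ]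
      (fun w => Phi (s-1) C 0 n r w z) := by
    filter_upwards [IsOpen.mem_nhds (isOpen_lt continuous_const Complex.continuous_im) hτ]
      with w hw
    exact hheat w hw z
  have hdtbar : dTbar (heatOp m (Phi s c₁ c₂ n r)) τ z
      = (Complex.I/2) * C * (s-1) * ((τ.im:ℂ))^(s-1-1) * Ee n r τ z := by
    simp only [dTbar, wDbar]
    rw [hev.fderiv_eq]
    have := (hasFDerivAt_Phi_t (s-1) C 0 n r z τ hτ).2
    simpa [wDbar] using this
  have hzb := dZbar_Phi s c₁ c₂ n r
  have hdz0 : dZ (fun _ _ => (0:ℂ)) = fun _ _ => 0 := funext fun a => funext fun b => wD_zero b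
  have hdzbar0 : dZbar (fun _ _ => (0:ℂ)) = fun _ _ => 0 :=
    funext fun a => funext fun b => wDbar_zero b
  have hdt0 : ∀ a b : ℂ, dT (fun _ _ => (0:ℂ)) a b = 0 := fun a b => wD_zero a
  simp only [Csk, hzb, hdz0, hdzbar0, hdt0, hdtbar]
  rw [hheat τ hτ z]
  have hy : ((τ.im:ℂ)) ≠ 0 := by
    simpa using ne_of_gt hτ
  have hYX : ((τ.im:ℂ))^(s-1) = ((τ.im:ℂ))^(s-1-1) * ((τ.im:ℂ))^(1:ℂ) := by
    rw [← Complex.cpow_add _ _ hy]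
    ring_nf
  have htb : τ - (starRingEnd ℂ) τ = 2 * (τ.im:ℂ) * Complex.I := by
    rw [Complex.sub_conj]
    push_cast
    ring
  simp only [Phi, hYX, Complex.cpow_one, htb]
  rw [hs]
  linear_combination (2*(2*(k:ℂ)-1) * C * (((τ.im:ℂ))^((3:ℂ)/2-(k:ℂ)-1-1)) * Ee n r τ z
    * ((τ.im:ℂ))^(2:ℕ) * Complex.I) * Complex.I_sq
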